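/- arXiv:2302.04086 — 2 statements merged into one kernel-verified Lean document; each statement's English description precedes it below -/
import Mathlib

section
/- For every n ≥ 1 and every unit pure quaternion μ, one has F_μ² = A and (F_μᴴ)² = A, where A is the n×n flip permutation matrix with A_{st} = 1 if s + t ≡ 0 (mod n) and A_{st} = 0 otherwise (0-indexed). -/
open Quaternion Matrix

/-- `ω = exp(−2πμ/n)`, the quaternion exponential of `(−2π/n)·μ`. -/
noncomputable def qomega (n : ℕ) (μ : ℍ[ℝ]) : ℍ[ℝ] :=
  NormedSpace.exp ((-(2 * Real.pi) / n : ℝ) • μ)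

/-- The `n×n` discrete quaternion Fourier transform matrix,
`(F_μ)_{uv} = (1/√n)·ω^{uv}` for `u, v = 0, …, n−1`. -/
noncomputable def qdft (n : ℕ) (μ : ℍ[ℝ]) : Matrix (Fin n) (Fin n) ℍ[ℝ] :=
  Matrix.of fun u v => ((Real.sqrt n)⁻¹ : ℝ) • (qomega n μ) ^ ((u : ℕ) * (v : ℕ))

/-- The `n×n` flip permutation matrix `A`, with `A_{st} = 1` iff `s + t ≡ 0 (mod n)`
(0-indexed). -/
noncomputable def flipMat (n : ℕ) : Matrix (Fin n) (Fin n) ℍ[ℝ] :=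
  Matrix.of fun s t => if ((s : ℕ) + (t : ℕ)) % n = 0 then 1 else 0

/-! For a unit pure quaternion `μ` we have `μ * μ = -1`, so `i ↦ μ` embeds `ℂ` into `ℍ`; it
sends the primitive `n`-th root of unity `exp (-2πi/n)` to `ω`, hence `ω` has order exactly `n`.
For any `ω` of order `n` in a ring without zero divisors, the `(u, v)` entry of the square of
`(ω ^ (u * v))` is the geometric sum `∑ k < n, (ω ^ (u + v)) ^ k`, which is `n` if `n ∣ u + v`
and `0` otherwise; the normalisation `(1/√n)²` cancels the `n`. The conjugate transpose of `F_μ`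
is the same matrix built from `star ω`, which again has order `n`. -/

open Finset

section DFT

variable {R : Type*}

def dftMatrix [Monoid R] (n : ℕ) (ω : R) : Matrix (Fin n) (Fin n) R :=
  of fun u v => ω ^ ((u : ℕ) * v)

def flipMatrix (R : Type*) [Zero R] [One R] (n : ℕ) : Matrix (Fin n) (Fin n) R :=
  of fun s t => if ((s : ℕ) + t) % n = 0 then 1 else 0

theorem geom_sum_eq_zero_of_pow_eq_one [Ring R] [NoZeroDivisors R] {x : R} {n : ℕ}
    (hx : x ^ n = 1) (hx1 : x ≠ 1) : ∑ k ∈ range n, x ^ k = 0 := by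
  have hprod := mul_neg_geom_sum x n
  rw [hx, sub_self] at hprod
  exact (mul_eq_zero.1 hprod).resolve_left (sub_ne_zero.2 hx1.symm)

theorem dftMatrix_sq [Ring R] [NoZeroDivisors R] {n : ℕ} {ω : R} (hω : orderOf ω = n) :
    dftMatrix n ω ^ 2 = n • flipMatrix R n := by
  ext u v
  have hterm (k : Fin n) :
      ω ^ ((u : ℕ) * k) * ω ^ ((k : ℕ) * v) = (ω ^ ((u : ℕ) + v)) ^ (k : ℕ) := by
    rw [← pow_add, ← pow_mul]
    congr 1
    ring
  have hroot : (ω ^ ((u : ℕ) + v)) ^ n = 1 := by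
    rw [← pow_mul, mul_comm, pow_mul, (hω ▸ pow_orderOf_eq_one ω : ω ^ n = 1), one_pow]
  have hone : ω ^ ((u : ℕ) + v) = 1 ↔ ((u : ℕ) + v) % n = 0 := by
    rw [← orderOf_dvd_iff_pow_eq_one, hω, Nat.dvd_iff_mod_eq_zero]
  simp only [sq, mul_apply, dftMatrix, flipMatrix, of_apply, Matrix.smul_apply, hterm,
    Fin.sum_univ_eq_sum_range (fun k => (ω ^ ((u : ℕ) + v)) ^ k)]
  by_cases h1 : ω ^ ((u : ℕ) + v) = 1
  · simp [h1, hone.1 h1]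
  · simp [geom_sum_eq_zero_of_pow_eq_one hroot h1, mt hone.2 h1]

theorem orderOf_star [Monoid R] [StarMul R] (x : R) : orderOf (star x) = orderOf x :=
  orderOf_eq_orderOf_iff.2 fun m => by rw [← star_pow, ← star_one, star_inj, star_one]

theorem conjTranspose_dftMatrix [Monoid R] [StarMul R] (n : ℕ) (ω : R) :
    (dftMatrix n ω)ᴴ = dftMatrix n (star ω) := by
  ext u v
  simp [dftMatrix, star_pow, mul_comm]

theorem inv_sqrt_smul_dftMatrix_sq [Ring R] [NoZeroDivisors R] [Algebra ℝ R] {n : ℕ} {ω : R}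
    (hω : orderOf ω = n) : ((Real.sqrt n)⁻¹ • dftMatrix n ω) ^ 2 = flipMatrix R n := by
  rcases n.eq_zero_or_pos with rfl | hn
  · exact Subsingleton.elim _ _
  have hscale : (Real.sqrt n)⁻¹ ^ 2 * n = 1 := by
    rw [inv_pow, Real.sq_sqrt n.cast_nonneg, inv_mul_cancel₀ (by positivity)]
  rw [smul_pow, dftMatrix_sq hω, ← Nat.cast_smul_eq_nsmul ℝ, smul_smul, hscale, one_smul]

end DFT

instance : StarModule ℝ ℍ[ℝ] :=
  ⟨fun r a => by rw [Quaternion.star_smul, star_trivial r]⟩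

theorem orderOf_qomega {n : ℕ} (hn : n ≠ 0) {μ : ℍ[ℝ]} (hpure : μ.re = 0) (hunit : ‖μ‖ = 1) :
    orderOf (qomega n μ) = n := by
  have hμ : μ * μ = -1 := by
    rw [← sq, sq_eq_neg_normSq.2 hpure, normSq_eq_norm_mul_self, hunit]
    simp
  set φ := Complex.liftAux μ hμ
  have hexp : qomega n μ = φ (Complex.exp (2 * Real.pi * Complex.I / n))⁻¹ := by
    have hφ : Continuous φ := φ.toLinearMap.continuous_of_finiteDimensional
    rw [← Complex.exp_neg, Complex.exp_eq_exp_ℂ, NormedSpace.map_exp φ hφ, qomega]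
    congr 1
    rw [← Complex.liftAux_apply_I μ hμ, ← map_smul]
    congr 1
    rw [Complex.real_smul]
    push_cast
    ring
  rw [hexp]
  exact (orderOf_injective (φ : ℂ →+* ℍ[ℝ]).toMonoidHom (RingHom.injective _) _).trans
    (Complex.isPrimitiveRoot_exp n hn).inv.eq_orderOf.symm

theorem qdft_eq_smul_dftMatrix (n : ℕ) (μ : ℍ[ℝ]) :
    qdft n μ = (Real.sqrt n)⁻¹ • dftMatrix n (qomega n μ) :=
  rfl

/-- for every `n ≥ 1` and unit pure quaternion `μ`, one has `F_μ² = A` and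
`(F_μᴴ)² = A`, where `A` is the flip permutation matrix. -/
theorem qdft_sq_eq_flip (n : ℕ) (hn : 1 ≤ n) (μ : ℍ[ℝ]) (hpure : μ.re = 0) (hunit : ‖μ‖ = 1) :
    qdft n μ ^ 2 = flipMat n ∧ (qdft n μ)ᴴ ^ 2 = flipMat n := by
  have hω : orderOf (qomega n μ) = n := orderOf_qomega (by omega) hpure hunit
  rw [qdft_eq_smul_dftMatrix]
  refine ⟨inv_sqrt_smul_dftMatrix_sq hω, ?_⟩
  rw [conjTranspose_smul, star_trivial, conjTranspose_dftMatrix]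
  exact inv_sqrt_smul_dftMatrix_sq ((orderOf_star _).trans hω)
end

section
/- Let C be any n×n quaternion circulant matrix and μ a unit pure quaternion. Then every entry of F_μ C F_μᴴ at a position (s,t) (0-indexed) with s ≠ t and s + t ≢ 0 (mod n) is zero; i.e., the nonzero entries of F_μ C F_μᴴ can appear only on the main diagonal and at the positions (s,t) with s + t ≡ 0 (mod n). -/
/-!
Since `μ * μ = -1`, `z ↦ Re z + (Im z) μ` embeds `ℂ` into `ℍ` and sends `ζ = exp (-2πi/n)` to `ω`,
so every entry of `F_μ` and of `F_μᴴ` lies in this copy of `ℂ`. Each quaternion splits as `a + b`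
with `a` commuting and `b` anticommuting with `μ`; complex scalars move past `a` unchanged and past
`b` conjugated. The `(s, t)` entry of `F_μ C F_μᴴ` thereby becomes a combination of the geometric
sums `∑ᵥ (ζ^s ζ̄^t)^v` and `∑ᵥ (ζ̄^(s + t))^v`, which vanish when `s ≠ t`, resp. `n ∤ s + t`.
-/

open Quaternion Matrix

open ComplexConjugate

theorem Matrix.mul_circulant_mul_apply {α ι : Type*} [NonUnitalNonAssocSemiring α] [AddGroup ι]
    [Fintype ι] (P Q : Matrix ι ι α) (c : ι → α) (s t : ι) :
    (P * circulant c * Q) s t = ∑ k, ∑ v, P s (k + v) * c k * Q v t := by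
  simp only [mul_apply, circulant_apply, Finset.sum_mul]
  conv_rhs => rw [Finset.sum_comm]
  refine Finset.sum_congr rfl fun v _ => ?_
  exact (Fintype.sum_equiv (Equiv.addRight v) _ _ fun k => by simp).symm

theorem Fin.sum_pow_eq_zero_of_pow_eq_one {R : Type*} [DivisionRing R] {w : R} {n : ℕ}
    (hwn : w ^ n = 1) (hw : w ≠ 1) : ∑ v : Fin n, w ^ (v : ℕ) = 0 := by
  rw [Fin.sum_univ_eq_sum_range (w ^ ·), geom_sum_eq hw, hwn, sub_self, zero_div]

theorem pow_mul_val_add_of_pow_eq_one {M : Type*} [Monoid M] {x : M} {n : ℕ} (hx : x ^ n = 1)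
    (s : ℕ) (k v : Fin n) : x ^ (s * ((k + v : Fin n) : ℕ)) = x ^ (s * k) * x ^ (s * v) := by
  have hxs : (x ^ s) ^ n = 1 := by rw [← pow_mul, mul_comm, pow_mul, hx, one_pow]
  rw [pow_mul, Fin.val_add, ← pow_eq_pow_mod _ hxs, pow_add, pow_mul, pow_mul]

section ImaginaryUnit

variable {A : Type*} [Ring A] [Algebra ℝ A] {μ : A}

theorem exists_commute_add_anticommute (hμ : μ * μ = -1) (q : A) :
    ∃ a b : A, Commute μ a ∧ μ * b = -(b * μ) ∧ q = a + b := by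
  have hleft : μ * (μ * q * μ) = -(q * μ) := by
    rw [← mul_assoc, ← mul_assoc, hμ, neg_one_mul, neg_mul]
  have hright : μ * q * μ * μ = -(μ * q) := by rw [mul_assoc, hμ, mul_neg_one]
  refine ⟨(2 : ℝ)⁻¹ • (q - μ * q * μ), (2 : ℝ)⁻¹ • (q + μ * q * μ), ?_, ?_, ?_⟩
  · change μ * _ = _ * μ
    rw [mul_smul_comm, smul_mul_assoc, mul_sub, sub_mul, hleft, hright]
    abel_nf
  · rw [mul_smul_comm, smul_mul_assoc, ← smul_neg, mul_add, add_mul, hleft, hright]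
    abel_nf
  · rw [← smul_add, sub_add_add_cancel, ← two_smul ℝ q, smul_smul]
    norm_num

theorem Complex.liftAux_mul_of_commute (hμ : μ * μ = -1) {q : A} (hq : Commute μ q) (z : ℂ) :
    liftAux μ hμ z * q = q * liftAux μ hμ z := by
  simp only [liftAux_apply, add_mul, mul_add, Algebra.commutes, smul_mul_assoc, mul_smul_comm,
    hq.eq]

theorem Complex.liftAux_mul_of_anticommute (hμ : μ * μ = -1) {q : A} (hq : μ * q = -(q * μ))
    (z : ℂ) : liftAux μ hμ z * q = q * liftAux μ hμ (conj z) := by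
  simp only [liftAux_apply, add_mul, mul_add, Algebra.commutes, smul_mul_assoc, mul_smul_comm,
    hq, mul_neg, smul_neg, conj_re, conj_im, neg_smul]

theorem sum_liftAux_pow_mul_mul_liftAux_pow_eq_zero_of_intertwine (hμ : μ * μ = -1) {σ : ℂ →+* ℂ}
    {q : A} (hq : ∀ z, Complex.liftAux μ hμ z * q = q * Complex.liftAux μ hμ (σ z)) {x y : ℂ}
    {n : ℕ} (hx : x ^ n = 1) (hy : y ^ n = 1) (s t : ℕ) (k : Fin n) (hxy : σ x ^ s * y ^ t ≠ 1) :
    ∑ v : Fin n, Complex.liftAux μ hμ (x ^ (s * (k + v : Fin n))) * q *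
      Complex.liftAux μ hμ (y ^ (t * v)) = 0 := by
  have hσx : σ x ^ n = 1 := by rw [← map_pow, hx, map_one]
  have hw : (σ x ^ s * y ^ t) ^ n = 1 := by
    rw [mul_pow, ← pow_mul, ← pow_mul, mul_comm s, mul_comm t, pow_mul, pow_mul, hσx, hy,
      one_pow, one_pow, one_mul]
  calc ∑ v : Fin n, Complex.liftAux μ hμ (x ^ (s * (k + v : Fin n))) * q *
        Complex.liftAux μ hμ (y ^ (t * v))
      = ∑ v : Fin n, q * Complex.liftAux μ hμ
          (σ x ^ (s * k) * (σ x ^ s * y ^ t) ^ (v : ℕ)) := by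
        refine Finset.sum_congr rfl fun v _ => ?_
        rw [hq, mul_assoc, ← map_mul, map_pow, pow_mul_val_add_of_pow_eq_one hσx]
        congr 2
        ring
    _ = q * Complex.liftAux μ hμ
          (σ x ^ (s * k) * ∑ v : Fin n, (σ x ^ s * y ^ t) ^ (v : ℕ)) := by
        rw [Finset.mul_sum, map_sum, Finset.mul_sum]
    _ = 0 := by
        rw [Fin.sum_pow_eq_zero_of_pow_eq_one hw hxy, mul_zero, map_zero, mul_zero]

theorem sum_liftAux_pow_mul_mul_liftAux_pow_eq_zero (hμ : μ * μ = -1) (q : A) {x y : ℂ} {n : ℕ}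
    (hx : x ^ n = 1) (hy : y ^ n = 1) (s t : ℕ) (k : Fin n) (hcomm : x ^ s * y ^ t ≠ 1)
    (hanti : conj x ^ s * y ^ t ≠ 1) :
    ∑ v : Fin n, Complex.liftAux μ hμ (x ^ (s * (k + v : Fin n))) * q *
      Complex.liftAux μ hμ (y ^ (t * v)) = 0 := by
  obtain ⟨a, b, ha, hb, rfl⟩ := exists_commute_add_anticommute hμ q
  simp only [mul_add, add_mul, Finset.sum_add_distrib]
  rw [sum_liftAux_pow_mul_mul_liftAux_pow_eq_zero_of_intertwine hμ (σ := RingHom.id ℂ)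
      (Complex.liftAux_mul_of_commute hμ ha) hx hy s t k hcomm,
    sum_liftAux_pow_mul_mul_liftAux_pow_eq_zero_of_intertwine hμ
      (Complex.liftAux_mul_of_anticommute hμ hb) hx hy s t k hanti, add_zero]

end ImaginaryUnit

theorem Quaternion.mul_self_eq_neg_one_of_re_eq_zero {μ : ℍ[ℝ]} (hre : μ.re = 0)
    (hnorm : ‖μ‖ = 1) : μ * μ = -1 := by
  rw [← sq, sq_eq_neg_normSq.mpr hre, normSq_eq_norm_mul_self, hnorm, mul_one, coe_one]

theorem IsPrimitiveRoot.pow_mul_conj_pow_ne_one {ζ : ℂ} {n s t : ℕ} (h : IsPrimitiveRoot ζ n)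
    (hs : s < n) (ht : t < n) (hst : s ≠ t) : ζ ^ s * conj ζ ^ t ≠ 1 := by
  rw [← Complex.inv_eq_conj (h.norm'_eq_one (by omega)), inv_pow, ne_eq,
    mul_inv_eq_one₀ (pow_ne_zero _ (h.ne_zero (by omega)))]
  exact fun e => hst (h.pow_inj hs ht e)

theorem IsPrimitiveRoot.conj_pow_mul_conj_pow_ne_one {ζ : ℂ} {n s t : ℕ}
    (h : IsPrimitiveRoot ζ n) (hst : ¬ n ∣ s + t) : conj ζ ^ s * conj ζ ^ t ≠ 1 := by
  rwa [← pow_add, ← map_pow, map_ne_one_iff _ (RingHom.injective _), ne_eq, h.pow_eq_one_iff_dvd]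

theorem Quaternion.star_liftAux {μ : ℍ[ℝ]} (hμ : μ * μ = -1) (hre : μ.re = 0) (z : ℂ) :
    star (Complex.liftAux μ hμ z) = Complex.liftAux μ hμ (conj z) := by
  simp [Complex.liftAux_apply, star_eq_neg.mpr hre]

noncomputable def dftRoot (n : ℕ) : ℂ := Complex.exp (-(2 * Real.pi * Complex.I / n))

theorem isPrimitiveRoot_dftRoot {n : ℕ} (hn : n ≠ 0) : IsPrimitiveRoot (dftRoot n) n := by
  rw [dftRoot, Complex.exp_neg]
  exact (Complex.isPrimitiveRoot_exp n hn).inv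

theorem qomega_eq_liftAux {μ : ℍ[ℝ]} (hμ : μ * μ = -1) (n : ℕ) :
    qomega n μ = Complex.liftAux μ hμ (dftRoot n) := by
  have hcont : Continuous (Complex.liftAux μ hμ) :=
    (Complex.liftAux μ hμ).toLinearMap.continuous_of_finiteDimensional
  have harg : -(2 * Real.pi * Complex.I / n) = (-(2 * Real.pi) / n : ℝ) • Complex.I := by
    rw [Complex.real_smul]; push_cast; ring
  rw [dftRoot, harg, Complex.exp_eq_exp_ℂ, NormedSpace.map_exp _ hcont, map_smul,
    Complex.liftAux_apply_I, qomega]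

theorem qdft_apply {n : ℕ} {μ : ℍ[ℝ]} (hμ : μ * μ = -1) (u v : Fin n) :
    qdft n μ u v = (√n)⁻¹ • Complex.liftAux μ hμ (dftRoot n ^ ((u : ℕ) * v)) := by
  rw [qdft, of_apply, qomega_eq_liftAux hμ, map_pow]

theorem conjTranspose_qdft_apply {n : ℕ} {μ : ℍ[ℝ]} (hμ : μ * μ = -1) (hre : μ.re = 0)
    (u v : Fin n) :
    (qdft n μ)ᴴ u v = (√n)⁻¹ • Complex.liftAux μ hμ (conj (dftRoot n) ^ ((v : ℕ) * u)) := by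
  rw [conjTranspose_apply, qdft_apply hμ, Quaternion.star_smul,
    Quaternion.star_liftAux hμ hre, map_pow]

theorem qdft_conj_circulant_support_general (n : ℕ) (μ : ℍ[ℝ])
    (hpure : μ.re = 0) (hunit : ‖μ‖ = 1) (c : Fin n → ℍ[ℝ]) :
    ∀ s t : Fin n, s ≠ t → ((s : ℕ) + (t : ℕ)) % n ≠ 0 →
      (qdft n μ * Matrix.circulant c * (qdft n μ)ᴴ) s t = 0 := by
  intro s t hst hsum
  have hμ := Quaternion.mul_self_eq_neg_one_of_re_eq_zero hpure hunit
  have : NeZero n := ⟨s.pos.ne'⟩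
  have hζ := isPrimitiveRoot_dftRoot s.pos.ne'
  have hζconj : conj (dftRoot n) ^ n = 1 := by rw [← map_pow, hζ.pow_eq_one, map_one]
  rw [mul_circulant_mul_apply]
  refine Finset.sum_eq_zero fun k _ => ?_
  simp only [qdft_apply hμ, conjTranspose_qdft_apply hμ hpure, smul_mul_assoc, mul_smul_comm,
    smul_smul, ← Finset.smul_sum]
  rw [sum_liftAux_pow_mul_mul_liftAux_pow_eq_zero hμ _ hζ.pow_eq_one hζconj s t k
    (hζ.pow_mul_conj_pow_ne_one s.isLt t.isLt (Fin.val_ne_of_ne hst))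
    (hζ.conj_pow_mul_conj_pow_ne_one (mt Nat.mod_eq_zero_of_dvd hsum)), smul_zero]

/-- for any quaternion circulant matrix `C` and unit pure quaternion `μ`, every
entry of `F_μ C F_μᴴ` at a position `(s,t)` with `s ≠ t` and `s + t ≢ 0 (mod n)` is zero;
i.e. the nonzero entries can appear only on the main diagonal and at positions with
`s + t ≡ 0 (mod n)`. -/
theorem qdft_conj_circulant_support (n : ℕ) (hn : 1 ≤ n) (μ : ℍ[ℝ])
    (hpure : μ.re = 0) (hunit : ‖μ‖ = 1) (c : Fin n → ℍ[ℝ]) :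
    ∀ s t : Fin n, s ≠ t → ((s : ℕ) + (t : ℕ)) % n ≠ 0 →
      (qdft n μ * Matrix.circulant c * (qdft n μ)ᴴ) s t = 0 :=
  qdft_conj_circulant_support_general n μ hpure hunit c
end
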